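/- Let A = (a^1, …, a^n) be a maximal clique of 𝒢(d,α) with signature sgn(A) = (s_1, …, s_{n−1}) and rank(A) > 0 (i.e., a^n ≠ η). Then the root rA (a maximal clique B = (b^1,…,b^n) with (b^1,…,b^{n−1}) = (a^2,…,a^n)) fails to exist if and only if either (a^1_1 = 1 and s_1 = 1) or (a^1_n = α_n − 1 and s_1 = n − 1). -/

import Mathlib

/-- The set `V_{n,d}^α` of nonnegative integer tuples with coordinate sum `d`
and coordinatewise bound `α`. -/
def VT (n d : ℕ) (α : Fin n → ℕ) : Set (Fin n → ℕ) :=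
  {c | (∑ i, c i) = d ∧ ∀ i, c i ≤ α i}

/-- `a >_lex b`: the leftmost nonzero entry of `a - b` is positive. -/
def lexGT {n : ℕ} (a b : Fin n → ℕ) : Prop :=
  ∃ i : Fin n, (∀ j, j < i → a j = b j) ∧ b i < a i

/-- `sort(a,b) = (a,b)` for Sturmfels' sorting operator: for every `t`, the prefix
sum of `a` up to `t` equals the ceiling of half the prefix sum of `a + b`. -/
def sortedPair {n : ℕ} (a b : Fin n → ℕ) : Prop :=
  ∀ t : Fin n, 2 * (∑ i ∈ Finset.Iic t, a i)
    = (∑ i ∈ Finset.Iic t, (a i + b i)) + (∑ i ∈ Finset.Iic t, (a i + b i)) % 2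

/-- The sorting signature set `Δ(a,b)` of a sorted pair, recorded (0-indexed) as the
set of positions `t` where the prefix sum of `b` is one less than that of `a`. -/
def sigSet {n : ℕ} (a b : Fin n → ℕ) : Finset (Fin n) :=
  Finset.univ.filter (fun t => (∑ i ∈ Finset.Iic t, b i) + 1 = ∑ i ∈ Finset.Iic t, a i)

/-- Adjacency in the sorting graph `𝒢(d,α)`. -/
def adjG {n : ℕ} (a b : Fin n → ℕ) : Prop :=
  (lexGT a b ∧ sortedPair a b) ∨ (lexGT b a ∧ sortedPair b a)

/-- A clique of the sorting graph `𝒢(d,α)`. -/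
def isClique (n d : ℕ) (α : Fin n → ℕ) (S : Finset (Fin n → ℕ)) : Prop :=
  (↑S ⊆ VT n d α) ∧ ∀ a ∈ S, ∀ b ∈ S, a ≠ b → adjG a b

/-- A maximal clique of the sorting graph `𝒢(d,α)`. -/
def isMaxClique (n d : ℕ) (α : Fin n → ℕ) (S : Finset (Fin n → ℕ)) : Prop :=
  isClique n d α S ∧ ∀ T, isClique n d α T → S ⊆ T → S = T

def Pf {n : ℕ} (a : Fin n → ℕ) (t : Fin n) : ℕ := ∑ i ∈ Finset.Iic t, a i

lemma Pf_zero {n : ℕ} (a : Fin (n+1) → ℕ) : Pf a 0 = a 0 := by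
  unfold Pf
  rw [show Finset.Iic (0 : Fin (n+1)) = {0} by
    ext x; simp [Fin.le_def, -Fin.val_fin_le]]
  simp

lemma Pf_succ {n : ℕ} (a : Fin (n+1) → ℕ) (t : Fin n) :
    Pf a t.succ = Pf a t.castSucc + a t.succ := by
  unfold Pf
  rw [show Finset.Iic t.succ = insert t.succ (Finset.Iic t.castSucc) by
    ext x
    simp only [Finset.mem_Iic, Finset.mem_insert, Fin.le_def, Fin.ext_iff, Fin.val_succ,
      Fin.coe_castSucc]
    omega]
  rw [Finset.sum_insert (by
    simp only [Finset.mem_Iic, Fin.le_def, Fin.val_succ, Fin.coe_castSucc]; omega)]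
  ring

lemma Pf_last {n : ℕ} (a : Fin (n+1) → ℕ) : Pf a (Fin.last n) = ∑ i, a i := by
  unfold Pf
  congr 1
  ext x; simp [Fin.le_def]; omega

lemma eq_of_Pf {n : ℕ} {a b : Fin (n+1) → ℕ} (h : ∀ t, Pf a t = Pf b t) : a = b := by
  funext t
  cases t using Fin.cases with
  | zero => have := h 0; rwa [Pf_zero, Pf_zero] at this
  | succ t =>
    have h1 := h t.succ
    have h2 := h t.castSucc
    rw [Pf_succ, Pf_succ] at h1
    omega

lemma sortedPair_iff {n : ℕ} (a b : Fin n → ℕ) :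
    sortedPair a b ↔ ∀ t, Pf b t ≤ Pf a t ∧ Pf a t ≤ Pf b t + 1 := by
  unfold sortedPair Pf
  constructor
  · intro h t
    have := h t
    rw [Finset.sum_add_distrib] at this
    omega
  · intro h t
    have := h t
    rw [Finset.sum_add_distrib]
    omega

lemma lexGT_irrefl {n : ℕ} (a : Fin n → ℕ) : ¬ lexGT a a := by
  rintro ⟨i, _, hi⟩; omega

lemma lexGT_asymm {n : ℕ} {a b : Fin n → ℕ} (h : lexGT a b) : ¬ lexGT b a := by
  obtain ⟨i, hpre, hi⟩ := h
  rintro ⟨j, hpre', hj⟩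
  rcases lt_trichotomy i j with hij | hij | hij
  · have := hpre' i hij; omega
  · subst hij; omega
  · have := hpre j hij; omega

lemma lexGT_trans {n : ℕ} {a b c : Fin n → ℕ} (h1 : lexGT a b) (h2 : lexGT b c) :
    lexGT a c := by
  obtain ⟨i, hpre, hi⟩ := h1
  obtain ⟨j, hpre', hj⟩ := h2
  rcases lt_trichotomy i j with hij | hij | hij
  · exact ⟨i, fun k hk => (hpre k hk).trans (hpre' k (hk.trans hij)), by
      have := hpre' i hij; omega⟩
  · subst hij; exact ⟨i, fun k hk => (hpre k hk).trans (hpre' k hk), by omega⟩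
  · exact ⟨j, fun k hk => (hpre k (hk.trans hij)).trans (hpre' k hk), by
      have := hpre j hij; omega⟩

lemma lexGT_total {n : ℕ} {a b : Fin n → ℕ} (h : a ≠ b) : lexGT a b ∨ lexGT b a := by
  have hne : (Finset.univ.filter fun i => a i ≠ b i).Nonempty := by
    by_contra h'
    rw [Finset.not_nonempty_iff_eq_empty, Finset.filter_eq_empty_iff] at h'
    exact h (funext fun i => by have := h' (Finset.mem_univ i); tauto)
  obtain ⟨i0, hi0mem, hi0min⟩ := Finset.exists_min_image _ id hne
  have hi0 : a i0 ≠ b i0 := (Finset.mem_filter.mp hi0mem).2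
  have hpre : ∀ j, j < i0 → a j = b j := by
    intro j hj
    by_contra hne'
    have := hi0min j (Finset.mem_filter.mpr ⟨Finset.mem_univ j, hne'⟩)
    simp only [id] at this
    omega
  rcases lt_or_gt_of_ne hi0 with hlt | hlt
  · exact Or.inr ⟨i0, fun j hj => (hpre j hj).symm, hlt⟩
  · exact Or.inl ⟨i0, hpre, hlt⟩

lemma sum_shift {n : ℕ} {f g : Fin n → ℕ} {p q : Fin n}
    (h : ∀ j, f j + (if j = p then 1 else 0) = g j + (if j = q then 1 else 0)) (t : Fin n) :
    Pf f t + (if p ≤ t then 1 else 0) = Pf g t + (if q ≤ t then 1 else 0) := by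
  unfold Pf
  have h1 : ∀ (r : Fin n), (∑ j ∈ Finset.Iic t, if j = r then 1 else 0)
      = if r ≤ t then 1 else 0 := by
    intro r
    rw [Finset.sum_ite_eq' (Finset.Iic t) r (fun _ => 1)]
    simp [Finset.mem_Iic]
  calc (∑ j ∈ Finset.Iic t, f j) + (if p ≤ t then 1 else 0)
      = ∑ j ∈ Finset.Iic t, (f j + if j = p then 1 else 0) := by
        rw [Finset.sum_add_distrib, h1]
    _ = ∑ j ∈ Finset.Iic t, (g j + if j = q then 1 else 0) := by
        exact Finset.sum_congr rfl fun j _ => h j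
    _ = (∑ j ∈ Finset.Iic t, g j) + (if q ≤ t then 1 else 0) := by
        rw [Finset.sum_add_distrib, h1]

/-- Prefix sums for a single sorting step `b = a - e_p + e_{p+1}`. -/
lemma stepPf {m : ℕ} (a b : Fin (m+2) → ℕ) (p : Fin (m+1))
    (h1 : b p.castSucc + 1 = a p.castSucc)
    (h2 : b p.succ = a p.succ + 1)
    (h3 : ∀ t, t ≠ p.castSucc → t ≠ p.succ → b t = a t) :
    (∀ t, t ≠ p.castSucc → Pf b t = Pf a t) ∧
      (Pf b p.castSucc + 1 = Pf a p.castSucc) := by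
  have hne : p.castSucc ≠ p.succ := (Fin.castSucc_lt_succ (i := p)).ne
  have hpt : ∀ j, b j + (if j = p.castSucc then 1 else 0)
      = a j + (if j = p.succ then 1 else 0) := by
    intro j
    by_cases hc : j = p.castSucc
    · subst hc; simp [hne]; omega
    · by_cases hd : j = p.succ
      · subst hd; simp [hne.symm]; omega
      · simp [hc, hd, h3 j hc hd]
  have key := sum_shift hpt
  constructor
  · intro t ht
    have h := key t
    by_cases hA : p.succ ≤ t
    · have hB : p.castSucc ≤ t := le_of_lt (lt_of_lt_of_le (Fin.castSucc_lt_succ (i := p)) hA)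
      rw [if_pos hA, if_pos hB] at h; omega
    · have hB : ¬ p.castSucc ≤ t := by
        intro hc
        exact hA (Fin.castSucc_lt_iff_succ_le.mp (lt_of_le_of_ne hc (Ne.symm ht)))
      rw [if_neg hA, if_neg hB] at h; omega
  · have h := key p.castSucc
    have hA : ¬ p.succ ≤ p.castSucc := by
      simp [Fin.le_def]
    rw [if_pos (le_refl _), if_neg hA] at h; omega

/-- Telescoped prefix sums along the clique `A`. -/
lemma F3 {m : ℕ} (A : Fin (m+2) → Fin (m+2) → ℕ) (s : Fin (m+1) → Fin (m+1))
    (hsinj : Function.Injective s)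
    (hs : ∀ i : Fin (m+1),
      A i.succ ((s i).castSucc) + 1 = A i.castSucc ((s i).castSucc) ∧
      A i.succ ((s i).succ) = A i.castSucc ((s i).succ) + 1 ∧
      ∀ t : Fin (m+2), t ≠ (s i).castSucc → t ≠ (s i).succ →
        A i.succ t = A i.castSucc t) :
    ∀ (k t : Fin (m+2)),
      Pf (A k) t + (if ∃ i : Fin (m+1), i.succ ≤ k ∧ (s i).castSucc = t then 1 else 0)
        = Pf (A 0) t := by
  intro k
  induction k using Fin.induction with
  | zero =>
    intro t
    rw [if_neg (by
      rintro ⟨i, hle, -⟩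
      simp [Fin.le_def] at hle)]
    omega
  | succ k ih =>
    intro t
    by_cases ht : t = (s k).castSucc
    · subst ht
      rw [if_pos ⟨k, le_refl _, rfl⟩]
      have hstep := (stepPf (A k.castSucc) (A k.succ) (s k) (hs k).1 (hs k).2.1 (hs k).2.2).2
      have hih := ih ((s k).castSucc)
      rw [if_neg (by
        rintro ⟨i, hle, heq⟩
        have hik : i = k := hsinj (Fin.castSucc_injective _ heq)
        subst hik
        simp [Fin.le_def] at hle)] at hih
      omega
    · have hstep := (stepPf (A k.castSucc) (A k.succ) (s k) (hs k).1 (hs k).2.1 (hs k).2.2).1 t ht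
      rw [hstep]
      have hiff : (∃ i : Fin (m+1), i.succ ≤ k.succ ∧ (s i).castSucc = t)
          ↔ (∃ i : Fin (m+1), i.succ ≤ k.castSucc ∧ (s i).castSucc = t) := by
        constructor
        · rintro ⟨i, hle, heq⟩
          refine ⟨i, ?_, heq⟩
          have hik : i ≠ k := by rintro rfl; exact ht heq.symm
          have hv : (i : ℕ) ≠ (k : ℕ) := fun h => hik (Fin.ext h)
          simp only [Fin.le_def, Fin.val_succ, Fin.coe_castSucc] at hle ⊢
          omega
        · rintro ⟨i, hle, heq⟩
          exact ⟨i, le_trans hle (le_of_lt (Fin.castSucc_lt_succ (i := k))), heq⟩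
      rw [if_congr hiff rfl rfl]
      exact ih t

/-- A tuple of `m+2` lex-decreasing vertices whose prefix sums drop exactly once per
column forms a maximal clique. -/
lemma maxB {m : ℕ} (d : ℕ) (α : Fin (m+2) → ℕ) (B : Fin (m+2) → Fin (m+2) → ℕ)
    (hBV : ∀ k, B k ∈ VT (m+2) d α)
    (hBdec : ∀ i j : Fin (m+2), i < j → lexGT (B i) (B j))
    (e : Fin (m+2) → Fin (m+2) → ℕ)
    (hF6 : ∀ k t, Pf (B k) t + e k t = Pf (B 0) t)
    (he1 : ∀ k t, e k t ≤ 1)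
    (hemono : ∀ k1 k2 t, k1 ≤ k2 → e k1 t ≤ e k2 t)
    (helast : ∀ t, t ≠ Fin.last (m+1) → e (Fin.last (m+1)) t = 1)
    (heuniq : ∀ (k : Fin (m+1)) (t1 t2 : Fin (m+2)),
        e k.castSucc t1 < e k.succ t1 → e k.castSucc t2 < e k.succ t2 → t1 = t2) :
    isMaxClique (m+2) d α (Finset.image B Finset.univ) := by
  classical
  have hPd : ∀ x ∈ VT (m+2) d α, Pf x (Fin.last (m+1)) = d := by
    intro x hx
    rw [Pf_last]
    exact hx.1
  have hkey : ∀ i j : Fin (m+2), i < j → lexGT (B i) (B j) ∧ sortedPair (B i) (B j) := by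
    intro i j h
    refine ⟨hBdec i j h, (sortedPair_iff _ _).mpr fun t => ?_⟩
    have f1 := hF6 i t
    have f2 := hF6 j t
    have h1 := hemono i j t h.le
    have h2 := he1 j t
    omega
  constructor
  · constructor
    · intro x hx
      obtain ⟨k, -, rfl⟩ := Finset.mem_image.mp hx
      exact hBV k
    · intro x hx y hy hxy
      obtain ⟨i, -, rfl⟩ := Finset.mem_image.mp hx
      obtain ⟨j, -, rfl⟩ := Finset.mem_image.mp hy
      have hij : i ≠ j := by rintro rfl; exact hxy rfl
      rcases lt_or_gt_of_ne hij with h | h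
      · exact Or.inl (hkey i j h)
      · exact Or.inr (hkey j i h)
  · intro T hT hsub
    refine Finset.Subset.antisymm hsub fun x hx => ?_
    by_contra hxB
    have hxV : x ∈ VT (m+2) d α := hT.1 hx
    have hxne : ∀ k, x ≠ B k := by
      intro k he
      exact hxB (he ▸ Finset.mem_image.mpr ⟨k, Finset.mem_univ k, rfl⟩)
    have hBT : ∀ k, B k ∈ T := fun k => hsub (Finset.mem_image.mpr ⟨k, Finset.mem_univ k, rfl⟩)
    have hadj : ∀ k, adjG x (B k) := fun k => hT.2 x hx (B k) (hBT k) (hxne k)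
    have hsor : ∀ k, lexGT (B k) x → ∀ t, Pf x t ≤ Pf (B k) t ∧ Pf (B k) t ≤ Pf x t + 1 := by
      intro k hk
      have hst : sortedPair (B k) x := by
        rcases hadj k with ⟨hl, -⟩ | ⟨-, hp⟩
        · exact absurd hl (lexGT_asymm hk)
        · exact hp
      exact (sortedPair_iff _ _).mp hst
    have hsor' : ∀ k, lexGT x (B k) → ∀ t, Pf (B k) t ≤ Pf x t ∧ Pf x t ≤ Pf (B k) t + 1 := by
      intro k hk
      have hst : sortedPair x (B k) := by
        rcases hadj k with ⟨-, hp⟩ | ⟨hl, -⟩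
        · exact hp
        · exact absurd hl (lexGT_asymm hk)
      exact (sortedPair_iff _ _).mp hst
    have hxd : Pf x (Fin.last (m+1)) = d := hPd x hxV
    have hBd : ∀ k, Pf (B k) (Fin.last (m+1)) = d := fun k => hPd _ (hBV k)
    by_cases hL : lexGT (B (Fin.last (m+1))) x
    · have hall : ∀ k, lexGT (B k) x := by
        intro k
        rcases eq_or_lt_of_le (Fin.le_last k) with h | h
        · rwa [h]
        · exact lexGT_trans (hBdec k _ h) hL
      refine hxne (Fin.last (m+1)) (eq_of_Pf fun t => ?_)
      by_cases ht : t = Fin.last (m+1)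
      · subst ht; rw [hxd, hBd]
      · have e1 := helast t ht
        have f1 := hF6 (Fin.last (m+1)) t
        have h0 := hsor 0 (hall 0) t
        have h2 := hsor (Fin.last (m+1)) (hall _) t
        omega
    · have hLx : lexGT x (B (Fin.last (m+1))) :=
        (lexGT_total (hxne _)).resolve_right hL
      by_cases h0 : lexGT x (B 0)
      · have hall : ∀ k, lexGT x (B k) := by
          intro k
          by_cases hk : k = 0
          · rwa [hk]
          · exact lexGT_trans h0 (hBdec 0 k (Fin.pos_iff_ne_zero.mpr hk))
        refine hxne 0 (eq_of_Pf fun t => ?_)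
        by_cases ht : t = Fin.last (m+1)
        · subst ht; rw [hxd, hBd]
        · have e1 := helast t ht
          have f1 := hF6 (Fin.last (m+1)) t
          have h1 := hsor' 0 (hall 0) t
          have h2 := hsor' (Fin.last (m+1)) (hall _) t
          omega
      · have h0' : lexGT (B 0) x := (lexGT_total (hxne 0)).resolve_left h0
        obtain ⟨k0, hk0S, hk0min⟩ := Finset.exists_min_image
          (Finset.univ.filter fun k => ¬ lexGT (B k) x) id
          ⟨Fin.last (m+1), Finset.mem_filter.mpr ⟨Finset.mem_univ _, hL⟩⟩
        have hk0 : ¬ lexGT (B k0) x := (Finset.mem_filter.mp hk0S).2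
        have hk0ne : k0 ≠ 0 := by rintro rfl; exact hk0 h0'
        have hlow : ∀ k, k < k0 → lexGT (B k) x := by
          intro k hk
          by_contra hc
          have := hk0min k (Finset.mem_filter.mpr ⟨Finset.mem_univ _, hc⟩)
          simp only [id] at this
          exact absurd hk (not_lt.mpr this)
        have hup : lexGT x (B k0) := (lexGT_total (hxne k0)).resolve_right hk0
        have hk0v : (k0 : ℕ) ≠ 0 := fun h => hk0ne (Fin.ext h)
        set k' : Fin (m+1) := ⟨(k0 : ℕ) - 1, by omega⟩ with hk'
        have hks : k'.succ = k0 := by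
          apply Fin.ext
          simp only [Fin.val_succ, hk']
          omega
        have hkc : k'.castSucc < k0 := by rw [← hks]; exact Fin.castSucc_lt_succ (i := k')
        have hA := hsor _ (hlow _ hkc)
        have hBb := hsor' k0 hup
        rw [← hks] at hBb
        have hemcs : ∀ t, e k'.castSucc t ≤ e k'.succ t :=
          fun t => hemono _ _ t (le_of_lt (Fin.castSucc_lt_succ (i := k')))
        have hsq : ∀ t, e k'.castSucc t = e k'.succ t → Pf x t = Pf (B k'.castSucc) t := by
          intro t he
          have f1 := hF6 k'.castSucc t
          have f2 := hF6 k'.succ t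
          have h1 := hA t
          have h2 := hBb t
          omega
        by_cases hxc : ∀ t, Pf x t = Pf (B k'.castSucc) t
        · exact hxne _ (eq_of_Pf hxc)
        · push_neg at hxc
          obtain ⟨t1, ht1⟩ := hxc
          have hd1 : e k'.castSucc t1 < e k'.succ t1 := by
            by_contra hcon
            exact ht1 (hsq t1 (le_antisymm (hemcs t1) (not_lt.mp hcon)))
          refine hxne k'.succ (eq_of_Pf fun t => ?_)
          by_cases hd : e k'.castSucc t < e k'.succ t
          · have hteq := heuniq k' t t1 hd hd1
            subst hteq
            have f1 := hF6 k'.castSucc t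
            have f2 := hF6 k'.succ t
            have h1 := hA t
            have h2 := hBb t
            have h3 := he1 k'.succ t
            omega
          · have heq := le_antisymm (hemcs t) (not_lt.mp hd)
            have := hsq t heq
            have f1 := hF6 k'.castSucc t
            have f2 := hF6 k'.succ t
            omega

lemma fin_cases_last {n : ℕ} (i : Fin (n+1)) : i = Fin.last n ∨ ∃ j : Fin n, i = j.castSucc := by
  by_cases h : i = Fin.last n
  · exact Or.inl h
  · refine Or.inr ⟨⟨(i : ℕ), ?_⟩, ?_⟩
    · have h1 := i.isLt
      have h2 : (i : ℕ) ≠ n := by simpa [Fin.ext_iff] using h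
      omega
    · apply Fin.ext; simp

/-- For a maximal clique `A` with signature `s` and `rank(A) > 0` (i.e. its last
element is not `η`), the root `rA` fails to exist iff `a^1_1 = 1 ∧ s_1 = 1` or
`a^1_n = α_n - 1 ∧ s_1 = n - 1`.  (Here `n = m + 2`.) -/
theorem stmt17 (m d : ℕ) (hm : 1 ≤ m) (α : Fin (m + 2) → ℕ)
    (hα0 : 1 ≤ α 0) (hmono : Monotone α)
    (hαd : ∀ i, α i ≤ d) (hdα : d < ∑ i, α i)
    (η : Fin (m + 2) → ℕ)
    (hη : ∀ i : Fin (m + 2), η i = min (α i) (d - ∑ j ∈ Finset.Ioi i, η j))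
    (A : Fin (m + 2) → (Fin (m + 2) → ℕ))
    (hdec : ∀ i j : Fin (m + 2), i < j → lexGT (A i) (A j))
    (hmax : isMaxClique (m + 2) d α (Finset.image A Finset.univ))
    (s : Fin (m + 1) → Fin (m + 1)) (hsbij : Function.Bijective s)
    (hs : ∀ i : Fin (m + 1),
      A i.succ ((s i).castSucc) + 1 = A i.castSucc ((s i).castSucc) ∧
      A i.succ ((s i).succ) = A i.castSucc ((s i).succ) + 1 ∧
      ∀ t : Fin (m + 2), t ≠ (s i).castSucc → t ≠ (s i).succ →
        A i.succ t = A i.castSucc t)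
    (hrank : A (Fin.last (m + 1)) ≠ η) :
    (¬ ∃ B : Fin (m + 2) → (Fin (m + 2) → ℕ),
        (∀ i : Fin (m + 1), B i.castSucc = A i.succ) ∧
        (∀ i j : Fin (m + 2), i < j → lexGT (B i) (B j)) ∧
        isMaxClique (m + 2) d α (Finset.image B Finset.univ))
      ↔ ((A 0 0 = 1 ∧ s 0 = 0) ∨
         (A 0 (Fin.last (m + 1)) + 1 = α (Fin.last (m + 1)) ∧ s 0 = Fin.last m)) := by
  classical
  have hsinj := hsbij.injective
  have hssurj := hsbij.surjective
  have hF3 := F3 A s hsinj hs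
  have hlastne : ∀ i : Fin (m+1), (s i).castSucc ≠ Fin.last (m+1) := by
    intro i h
    have hv := congrArg Fin.val h
    simp only [Fin.coe_castSucc, Fin.val_last] at hv
    have := (s i).isLt
    omega
  have hcov : ∀ t : Fin (m+2), t ≠ Fin.last (m+1) → ∃ i : Fin (m+1), (s i).castSucc = t := by
    intro t ht
    have htv : (t : ℕ) < m+1 := by
      have h1 := t.isLt
      have h2 : (t : ℕ) ≠ m+1 := by simpa [Fin.ext_iff] using ht
      omega
    obtain ⟨i, hi⟩ := hssurj ⟨(t : ℕ), htv⟩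
    exact ⟨i, by simp [hi, Fin.ext_iff]⟩
  have hF4 : ∀ t, t ≠ Fin.last (m+1) → Pf (A (Fin.last (m+1))) t + 1 = Pf (A 0) t := by
    intro t ht
    obtain ⟨i, hi⟩ := hcov t ht
    have h := hF3 (Fin.last (m+1)) t
    rwa [if_pos ⟨i, Fin.le_last _, hi⟩] at h
  have hF4l : Pf (A (Fin.last (m+1))) (Fin.last (m+1)) = Pf (A 0) (Fin.last (m+1)) := by
    have h := hF3 (Fin.last (m+1)) (Fin.last (m+1))
    rw [if_neg (by rintro ⟨i, -, hi⟩; exact hlastne i hi)] at h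
    omega
  have hsl : (Fin.last m).succ = Fin.last (m+1) := by
    apply Fin.ext; simp
  have hG0 : A (Fin.last (m+1)) 0 + 1 = A 0 0 := by
    have h := hF4 0 (by simp [Fin.ext_iff])
    rwa [Pf_zero, Pf_zero] at h
  have hGmid : ∀ j : Fin (m+2), j ≠ 0 → j ≠ Fin.last (m+1) → A (Fin.last (m+1)) j = A 0 j := by
    intro j hj0 hjl
    cases j using Fin.cases with
    | zero => exact absurd rfl hj0
    | succ t' =>
      have h1 := hF4 t'.succ hjl
      rw [Pf_succ, Pf_succ] at h1
      have h2 := hF4 t'.castSucc (by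
        intro h
        have hv := congrArg Fin.val h
        simp only [Fin.coe_castSucc, Fin.val_last] at hv
        have := t'.isLt; omega)
      omega
  have hGlast : A (Fin.last (m+1)) (Fin.last (m+1)) = A 0 (Fin.last (m+1)) + 1 := by
    have h1 := hF4l
    rw [← hsl, Pf_succ, Pf_succ, hsl] at h1
    have h2 := hF4 (Fin.last m).castSucc (by
      intro h
      have hv := congrArg Fin.val h
      simp only [Fin.coe_castSucc, Fin.val_last] at hv
      omega)
    omega
  have hAV : ∀ k, A k ∈ VT (m+2) d α :=
    fun k => hmax.1.1 (Finset.mem_coe.mpr (Finset.mem_image.mpr ⟨k, Finset.mem_univ k, rfl⟩))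
  have hA0cs : 1 ≤ A 0 ((s 0).castSucc) := by
    have h := (hs 0).1
    rw [Fin.castSucc_zero] at h
    omega
  have hA1ss : A (Fin.succ 0) ((s 0).succ) = A 0 ((s 0).succ) + 1 := by
    have h := (hs 0).2.1
    rwa [Fin.castSucc_zero] at h
  constructor
  · -- no root exists → boundary condition
    intro hnB
    by_contra hcond
    push_neg at hcond
    obtain ⟨hc1, hc2⟩ := hcond
    apply hnB
    have haNcs : 1 ≤ A (Fin.last (m+1)) ((s 0).castSucc) := by
      by_cases h00 : s 0 = 0
      · have hne1 : A 0 0 ≠ 1 := fun he => hc1 he h00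
        rw [h00, Fin.castSucc_zero]
        rw [h00, Fin.castSucc_zero] at hA0cs
        omega
      · have hne0 : (s 0).castSucc ≠ 0 := by
          intro h
          apply h00
          apply Fin.ext
          simpa using congrArg Fin.val h
        rw [hGmid _ hne0 (hlastne 0)]
        exact hA0cs
    have haNss : A (Fin.last (m+1)) ((s 0).succ) + 1 ≤ α ((s 0).succ) := by
      have hb := (hAV (Fin.succ 0)).2 ((s 0).succ)
      rw [hA1ss] at hb
      by_cases hLm : s 0 = Fin.last m
      · have hssl : (s 0).succ = Fin.last (m+1) := by rw [hLm, hsl]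
        have hne : A 0 (Fin.last (m+1)) + 1 ≠ α (Fin.last (m+1)) := fun he => hc2 he hLm
        rw [hssl] at hb ⊢
        rw [hGlast]
        omega
      · have hssnl : (s 0).succ ≠ Fin.last (m+1) := by
          intro h
          apply hLm
          apply Fin.ext
          simp only [Fin.ext_iff, Fin.val_succ, Fin.val_last] at h ⊢
          omega
        rw [hGmid _ (Fin.succ_ne_zero _) hssnl]
        exact hb
    set c : Fin (m+2) → ℕ := fun j => if j = (s 0).castSucc then A (Fin.last (m+1)) j - 1
      else if j = (s 0).succ then A (Fin.last (m+1)) j + 1 else A (Fin.last (m+1)) j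
      with hcdef
    have hcscs : (s 0).castSucc ≠ (s 0).succ := (Fin.castSucc_lt_succ (i := _)).ne
    have hstep := stepPf (A (Fin.last (m+1))) c (s 0)
      (by simp only [hcdef, if_pos rfl, if_true, eq_self_iff_true]; omega)
      (by simp [hcdef, Ne.symm hcscs])
      (by intro t h1 h2; simp [hcdef, h1, h2])
    have hcV : c ∈ VT (m+2) d α := by
      constructor
      · have h := hstep.1 (Fin.last (m+1)) (Ne.symm (hlastne 0))
        rw [Pf_last, Pf_last] at h
        rw [h]
        exact (hAV _).1
      · intro j
        have hb := (hAV (Fin.last (m+1))).2 j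
        by_cases h1 : j = (s 0).castSucc
        · subst h1
          simp only [hcdef, if_pos rfl, if_true, eq_self_iff_true]
          omega
        · by_cases h2 : j = (s 0).succ
          · subst h2
            simp only [hcdef]
            rw [if_neg (Ne.symm hcscs)]
            simpa using haNss
          · simp only [hcdef]
            rw [if_neg h1, if_neg h2]
            exact hb
    have hlexc : lexGT (A (Fin.last (m+1))) c := by
      refine ⟨(s 0).castSucc, ?_, ?_⟩
      · intro j hj
        have hj1 : j ≠ (s 0).castSucc := hj.ne
        have hj2 : j ≠ (s 0).succ := (hj.trans (Fin.castSucc_lt_succ (i := _))).ne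
        simp only [hcdef]
        rw [if_neg hj1, if_neg hj2]
      · simp only [hcdef, if_pos rfl, if_true, eq_self_iff_true]
        omega
    set B : Fin (m+2) → (Fin (m+2) → ℕ) := Fin.snoc (fun i : Fin (m+1) => A i.succ) c
      with hBdef
    have hB1 : ∀ i : Fin (m+1), B i.castSucc = A i.succ := by
      intro i; simp [hBdef]
    have hBl : B (Fin.last (m+1)) = c := by simp [hBdef]
    have hB0 : B 0 = A (Fin.succ 0) := by
      have := hB1 0; rwa [Fin.castSucc_zero] at this
    have hBdec : ∀ i j : Fin (m+2), i < j → lexGT (B i) (B j) := by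
      intro i j hij
      rcases fin_cases_last j with rfl | ⟨j', rfl⟩
      · rw [hBl]
        obtain ⟨i', rfl⟩ : ∃ i' : Fin (m+1), i = i'.castSucc := by
          rcases fin_cases_last i with rfl | ⟨i', rfl⟩
          · exact absurd hij (lt_irrefl _)
          · exact ⟨i', rfl⟩
        rw [hB1]
        by_cases hil : i'.succ = Fin.last (m+1)
        · rw [hil]; exact hlexc
        · exact lexGT_trans
            (hdec i'.succ (Fin.last (m+1)) (lt_of_le_of_ne (Fin.le_last _) hil)) hlexc
      · obtain ⟨i', rfl⟩ : ∃ i' : Fin (m+1), i = i'.castSucc := by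
          rcases fin_cases_last i with rfl | ⟨i', rfl⟩
          · exact absurd hij (not_lt.mpr (Fin.le_last _))
          · exact ⟨i', rfl⟩
        rw [hB1, hB1]
        apply hdec
        have h1 : i' < j' := Fin.castSucc_lt_castSucc_iff.mp hij
        exact Fin.succ_lt_succ_iff.mpr h1
    have hBV : ∀ k, B k ∈ VT (m+2) d α := by
      intro k
      rcases fin_cases_last k with rfl | ⟨k', rfl⟩
      · rw [hBl]; exact hcV
      · rw [hB1]; exact hAV _
    have hA1P : ∀ t, Pf (A (Fin.succ (0 : Fin (m+1)))) t
        + (if (s 0).castSucc = t then 1 else 0) = Pf (A 0) t := by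
      intro t
      have h := hF3 (Fin.succ 0) t
      have hiff : (∃ i : Fin (m+1), i.succ ≤ Fin.succ (0 : Fin (m+1)) ∧ (s i).castSucc = t)
          ↔ ((s 0).castSucc = t) := by
        constructor
        · rintro ⟨i, hle, heq⟩
          have hi0 : i = 0 := by
            apply Fin.ext
            simp only [Fin.le_def, Fin.val_succ, Fin.val_zero] at hle ⊢
            omega
          rwa [hi0] at heq
        · intro h; exact ⟨0, le_refl _, h⟩
      rwa [if_congr hiff rfl rfl] at h
    have hf6 : ∀ k t : Fin (m+2), Pf (B k) t
        + (if (∃ i : Fin (m+1), 0 < i ∧ i.castSucc ≤ k ∧ (s i).castSucc = t)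
          ∨ (k = Fin.last (m+1) ∧ t ≠ Fin.last (m+1)) then 1 else 0) = Pf (B 0) t := by
      intro k t
      rcases fin_cases_last k with rfl | ⟨k', rfl⟩
      · rw [hBl, hB0]
        by_cases ht : t = Fin.last (m+1)
        · subst ht
          rw [if_neg (by
            rintro (⟨i, -, -, hit⟩ | ⟨-, hne⟩)
            · exact hlastne i hit
            · exact hne rfl)]
          rw [Pf_last, Pf_last, hcV.1, (hAV _).1]
          omega
        · rw [if_pos (Or.inr ⟨rfl, ht⟩)]
          have f2 := hA1P t
          by_cases hcs : t = (s 0).castSucc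
          · subst hcs
            have h1 := hstep.2
            have h2 := hF4 ((s 0).castSucc) (hlastne 0)
            rw [if_pos rfl] at f2
            omega
          · have h1 := hstep.1 t hcs
            have h2 := hF4 t ht
            rw [if_neg (fun h => hcs h.symm)] at f2
            omega
      · rw [hB1, hB0]
        have f1 := hF3 k'.succ t
        have f2 := hA1P t
        have hknl : k'.castSucc ≠ Fin.last (m+1) := (Fin.castSucc_lt_last k').ne
        by_cases hcs : (s 0).castSucc = t
        · by_cases hD : (∃ i : Fin (m+1), 0 < i ∧ i.castSucc ≤ k'.castSucc
              ∧ (s i).castSucc = t)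
          · exfalso
            obtain ⟨i, hi0, -, hit⟩ := hD
            have hi00 : i = 0 := hsinj (Fin.castSucc_injective _ (hit.trans hcs.symm))
            rw [hi00] at hi0
            exact lt_irrefl _ hi0
          · rw [if_neg (by
              rintro (h | ⟨hl, -⟩)
              · exact hD h
              · exact hknl hl)]
            rw [if_pos ⟨0, by simp [Fin.le_def], hcs⟩] at f1
            rw [if_pos hcs] at f2
            omega
        · by_cases hD : (∃ i : Fin (m+1), 0 < i ∧ i.castSucc ≤ k'.castSucc
              ∧ (s i).castSucc = t)
          · rw [if_pos (Or.inl hD)]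
            obtain ⟨i, hi0, hile, hit⟩ := hD
            rw [if_pos ⟨i, by
              simp only [Fin.le_def, Fin.coe_castSucc, Fin.val_succ] at hile ⊢
              omega, hit⟩] at f1
            rw [if_neg hcs] at f2
            omega
          · rw [if_neg (by
              rintro (h | ⟨hl, -⟩)
              · exact hD h
              · exact hknl hl)]
            rw [if_neg (by
              rintro ⟨i, hle, heq⟩
              by_cases hi0 : i = 0
              · rw [hi0] at heq; exact hcs heq
              · apply hD
                refine ⟨i, Fin.pos_of_ne_zero hi0, ?_, heq⟩
                simp only [Fin.le_def, Fin.coe_castSucc, Fin.val_succ] at hle ⊢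
                omega)] at f1
            rw [if_neg hcs] at f2
            omega
    have he1' : ∀ k t : Fin (m+2),
        (if (∃ i : Fin (m+1), 0 < i ∧ i.castSucc ≤ k ∧ (s i).castSucc = t)
          ∨ (k = Fin.last (m+1) ∧ t ≠ Fin.last (m+1)) then 1 else 0) ≤ 1 := by
      intro k t; split_ifs <;> omega
    have hemono' : ∀ k1 k2 t : Fin (m+2), k1 ≤ k2 →
        (if (∃ i : Fin (m+1), 0 < i ∧ i.castSucc ≤ k1 ∧ (s i).castSucc = t)
          ∨ (k1 = Fin.last (m+1) ∧ t ≠ Fin.last (m+1)) then 1 else 0)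
        ≤ (if (∃ i : Fin (m+1), 0 < i ∧ i.castSucc ≤ k2 ∧ (s i).castSucc = t)
          ∨ (k2 = Fin.last (m+1) ∧ t ≠ Fin.last (m+1)) then 1 else 0) := by
      intro k1 k2 t hk
      split_ifs with h1 h2
      · omega
      · exfalso
        rcases h1 with ⟨i, hi0, hile, hit⟩ | ⟨hkl, htn⟩
        · exact h2 (Or.inl ⟨i, hi0, le_trans hile hk, hit⟩)
        · have hk2 : k2 = Fin.last (m+1) := le_antisymm (Fin.le_last _) (hkl ▸ hk)
          exact h2 (Or.inr ⟨hk2, htn⟩)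
      · omega
      · omega
    have helast' : ∀ t : Fin (m+2), t ≠ Fin.last (m+1) →
        (if (∃ i : Fin (m+1), 0 < i ∧ i.castSucc ≤ Fin.last (m+1) ∧ (s i).castSucc = t)
          ∨ (Fin.last (m+1) = Fin.last (m+1) ∧ t ≠ Fin.last (m+1)) then 1 else 0) = 1 := by
      intro t ht
      rw [if_pos (Or.inr ⟨rfl, ht⟩)]
    have heuniq' : ∀ (k : Fin (m+1)) (t1 t2 : Fin (m+2)),
        (if (∃ i : Fin (m+1), 0 < i ∧ i.castSucc ≤ k.castSucc ∧ (s i).castSucc = t1)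
          ∨ (k.castSucc = Fin.last (m+1) ∧ t1 ≠ Fin.last (m+1)) then 1 else 0)
        < (if (∃ i : Fin (m+1), 0 < i ∧ i.castSucc ≤ k.succ ∧ (s i).castSucc = t1)
          ∨ (k.succ = Fin.last (m+1) ∧ t1 ≠ Fin.last (m+1)) then 1 else 0) →
        (if (∃ i : Fin (m+1), 0 < i ∧ i.castSucc ≤ k.castSucc ∧ (s i).castSucc = t2)
          ∨ (k.castSucc = Fin.last (m+1) ∧ t2 ≠ Fin.last (m+1)) then 1 else 0)
        < (if (∃ i : Fin (m+1), 0 < i ∧ i.castSucc ≤ k.succ ∧ (s i).castSucc = t2)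
          ∨ (k.succ = Fin.last (m+1) ∧ t2 ≠ Fin.last (m+1)) then 1 else 0) →
        t1 = t2 := by
      intro k t1 t2 h1 h2
      have hex : ∀ t : Fin (m+2),
          (if (∃ i : Fin (m+1), 0 < i ∧ i.castSucc ≤ k.castSucc ∧ (s i).castSucc = t)
            ∨ (k.castSucc = Fin.last (m+1) ∧ t ≠ Fin.last (m+1)) then 1 else 0)
          < (if (∃ i : Fin (m+1), 0 < i ∧ i.castSucc ≤ k.succ ∧ (s i).castSucc = t)
            ∨ (k.succ = Fin.last (m+1) ∧ t ≠ Fin.last (m+1)) then 1 else 0) →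
          ((∃ i : Fin (m+1), 0 < i ∧ i.castSucc ≤ k.succ ∧ (s i).castSucc = t)
            ∨ (k.succ = Fin.last (m+1) ∧ t ≠ Fin.last (m+1)))
          ∧ ¬((∃ i : Fin (m+1), 0 < i ∧ i.castSucc ≤ k.castSucc ∧ (s i).castSucc = t)
            ∨ (k.castSucc = Fin.last (m+1) ∧ t ≠ Fin.last (m+1))) := by
        intro t h
        split_ifs at h with hA hB hC
        · exact absurd h (by omega)
        · exact absurd h (by omega)
        · exact ⟨hC, hA⟩
        · exact absurd h (by omega)
      obtain ⟨hp1, hn1⟩ := hex t1 h1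
      obtain ⟨hp2, hn2⟩ := hex t2 h2
      by_cases hkl : k.succ = Fin.last (m+1)
      · have hkv : (k : ℕ) = m := by
          simpa [Fin.ext_iff, Fin.val_succ, Fin.val_last] using hkl
        have hchar : ∀ t : Fin (m+2),
            ((∃ i : Fin (m+1), 0 < i ∧ i.castSucc ≤ k.succ ∧ (s i).castSucc = t)
              ∨ (k.succ = Fin.last (m+1) ∧ t ≠ Fin.last (m+1))) →
            ¬((∃ i : Fin (m+1), 0 < i ∧ i.castSucc ≤ k.castSucc ∧ (s i).castSucc = t)
              ∨ (k.castSucc = Fin.last (m+1) ∧ t ≠ Fin.last (m+1))) →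
            t = (s 0).castSucc := by
          intro t hp hn
          rcases hp with ⟨i, hi0, -, hit⟩ | ⟨-, htn⟩
          · exfalso
            apply hn
            refine Or.inl ⟨i, hi0, ?_, hit⟩
            simp only [Fin.le_def, Fin.coe_castSucc]
            have := i.isLt; omega
          · obtain ⟨i, hi⟩ := hcov t htn
            have hi0 : i = 0 := by
              by_contra hne
              apply hn
              refine Or.inl ⟨i, Fin.pos_of_ne_zero hne, ?_, hi⟩
              simp only [Fin.le_def, Fin.coe_castSucc]
              have := i.isLt; omega
            rw [← hi, hi0]
        rw [hchar t1 hp1 hn1, hchar t2 hp2 hn2]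
      · have hchar : ∀ t : Fin (m+2),
            ((∃ i : Fin (m+1), 0 < i ∧ i.castSucc ≤ k.succ ∧ (s i).castSucc = t)
              ∨ (k.succ = Fin.last (m+1) ∧ t ≠ Fin.last (m+1))) →
            ¬((∃ i : Fin (m+1), 0 < i ∧ i.castSucc ≤ k.castSucc ∧ (s i).castSucc = t)
              ∨ (k.castSucc = Fin.last (m+1) ∧ t ≠ Fin.last (m+1))) →
            ∃ i : Fin (m+1), (i : ℕ) = (k : ℕ) + 1 ∧ t = (s i).castSucc := by
          intro t hp hn
          rcases hp with ⟨i, hi0, hile, hit⟩ | ⟨hl, -⟩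
          · refine ⟨i, ?_, hit.symm⟩
            have hnle : ¬ i.castSucc ≤ k.castSucc := by
              intro hle2
              exact hn (Or.inl ⟨i, hi0, hle2, hit⟩)
            simp only [Fin.le_def, Fin.coe_castSucc, Fin.val_succ] at hile hnle
            omega
          · exact absurd hl hkl
        obtain ⟨i1, hv1, ht1e⟩ := hchar t1 hp1 hn1
        obtain ⟨i2, hv2, ht2e⟩ := hchar t2 hp2 hn2
        have hi12 : i1 = i2 := Fin.ext (by omega)
        rw [ht1e, ht2e, hi12]
    exact ⟨B, hB1, hBdec, maxB d α B hBV hBdec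
      (fun k t => if (∃ i : Fin (m+1), 0 < i ∧ i.castSucc ≤ k ∧ (s i).castSucc = t)
        ∨ (k = Fin.last (m+1) ∧ t ≠ Fin.last (m+1)) then 1 else 0)
      hf6 he1' hemono' helast' heuniq'⟩
  · -- boundary condition → no root
    rintro hcond ⟨B, hB1, hB2, hB3⟩
    have hBV : ∀ k, B k ∈ VT (m+2) d α :=
      fun k => hB3.1.1 (Finset.mem_coe.mpr (Finset.mem_image.mpr ⟨k, Finset.mem_univ k, rfl⟩))
    have hcV := hBV (Fin.last (m+1))
    have hsor' : ∀ k : Fin (m+2), k ≠ 0 → ∀ t,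
        Pf (B (Fin.last (m+1))) t ≤ Pf (A k) t
        ∧ Pf (A k) t ≤ Pf (B (Fin.last (m+1))) t + 1 := by
      intro k hk
      have hkv : (k : ℕ) ≠ 0 := fun h => hk (Fin.ext h)
      set i : Fin (m+1) := ⟨(k : ℕ) - 1, by have := k.isLt; omega⟩ with hidef
      have hik : i.succ = k := by apply Fin.ext; simp [hidef]; omega
      have hlt : i.castSucc < Fin.last (m+1) := Fin.castSucc_lt_last i
      have hlex : lexGT (B i.castSucc) (B (Fin.last (m+1))) := hB2 _ _ hlt
      have hmem1 : B i.castSucc ∈ Finset.image B Finset.univ :=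
        Finset.mem_image.mpr ⟨_, Finset.mem_univ _, rfl⟩
      have hmem2 : B (Fin.last (m+1)) ∈ Finset.image B Finset.univ :=
        Finset.mem_image.mpr ⟨_, Finset.mem_univ _, rfl⟩
      have hne : B i.castSucc ≠ B (Fin.last (m+1)) := fun h => lexGT_irrefl _ (h ▸ hlex)
      have hst : sortedPair (B i.castSucc) (B (Fin.last (m+1))) := by
        rcases hB3.1.2 _ hmem1 _ hmem2 hne with ⟨-, hp⟩ | ⟨hl, -⟩
        · exact hp
        · exact absurd hl (lexGT_asymm hlex)
      rw [hB1 i, hik] at hst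
      exact (sortedPair_iff _ _).mp hst
    have hlastne0 : (Fin.last (m+1)) ≠ (0 : Fin (m+2)) := by simp [Fin.ext_iff]
    have hclex : lexGT (A (Fin.last (m+1))) (B (Fin.last (m+1))) := by
      have h := hB2 (Fin.last m).castSucc (Fin.last (m+1)) (Fin.castSucc_lt_last _)
      rw [hB1 (Fin.last m), hsl] at h
      exact h
    have hcne : ∀ t, t ≠ (s 0).castSucc →
        Pf (B (Fin.last (m+1))) t = Pf (A (Fin.last (m+1))) t := by
      intro t ht
      by_cases hl : t = Fin.last (m+1)
      · subst hl
        rw [Pf_last, Pf_last, hcV.1, (hAV _).1]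
      · obtain ⟨i, hi⟩ := hcov t hl
        have hi0 : i ≠ 0 := by rintro rfl; exact ht hi.symm
        have hstepi := (stepPf (A i.castSucc) (A i.succ) (s i) (hs i).1 (hs i).2.1 (hs i).2.2).2
        rw [hi] at hstepi
        have h1 := hsor' i.succ (Fin.succ_ne_zero i) t
        have h2 := hsor' i.castSucc (fun h => hi0 (by
          apply Fin.ext
          simpa using congrArg Fin.val h)) t
        have f1 := hF3 i.succ t
        rw [if_pos ⟨i, le_refl _, hi⟩] at f1
        have f2 := hF3 (Fin.last (m+1)) t
        rw [if_pos ⟨i, Fin.le_last _, hi⟩] at f2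
        omega
    have hccs : Pf (B (Fin.last (m+1))) ((s 0).castSucc) + 1
        = Pf (A (Fin.last (m+1))) ((s 0).castSucc) := by
      have h1 := hsor' (Fin.last (m+1)) hlastne0 ((s 0).castSucc)
      by_contra hc
      have heq : Pf (B (Fin.last (m+1))) ((s 0).castSucc)
          = Pf (A (Fin.last (m+1))) ((s 0).castSucc) := by omega
      have hBA : B (Fin.last (m+1)) = A (Fin.last (m+1)) := eq_of_Pf (fun t => by
        by_cases h : t = (s 0).castSucc
        · rw [h]; exact heq
        · exact hcne t h)
      exact lexGT_irrefl _ (hBA ▸ hclex)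
    rcases hcond with ⟨hA00, hs00⟩ | ⟨hAl, hs0l⟩
    · have hcz : (s 0).castSucc = 0 := by rw [hs00]; exact Fin.castSucc_zero
      rw [hcz, Pf_zero, Pf_zero] at hccs
      omega
    · have hcz : (s 0).castSucc = (Fin.last m).castSucc := by rw [hs0l]
      rw [hcz] at hccs
      have h1 : Pf (B (Fin.last (m+1))) (Fin.last (m+1)) = d := by
        rw [Pf_last]; exact hcV.1
      have h2 : Pf (A (Fin.last (m+1))) (Fin.last (m+1)) = d := by
        rw [Pf_last]; exact (hAV _).1
      rw [← hsl, Pf_succ, hsl] at h1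
      rw [← hsl, Pf_succ, hsl] at h2
      have h3 := hcV.2 (Fin.last (m+1))
      have h4 := hGlast
      have h5 := hAl
      omega
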